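/- If the origin is an interior point of the support of the perturbation measure μ and θ is any point with Mag(θ) < max Mag − ε, then there exist γ > 0 and η > 0 such that Pr[Mag(θ + δ) − Mag(θ) ≥ γ] ≥ η, where δ ∼ μ. -/

import Mathlib

/-!
Rotating only the `i`-th phase changes `‖S‖²`, where `S` is the resultant of the phasors
`zⱼ = aⱼ e^{iθⱼ}`, by `2 Re(conj (S - zᵢ) zᵢ (e^{it} - 1))`; so at a local maximum each
`conj (S - zᵢ) zᵢ` is a nonnegative real, i.e. every phasor points along `S`, and then
`‖S‖ = ∑ |aᵢ|`. Hence every local maximum of `Mag` is global, and a point with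
`Mag a θ < ∑ aᵢ - ε` can be improved by some `u` inside the cube. By continuity a whole
neighbourhood of `u` improves `Mag` by half as much, and that open set has positive volume.
-/

open MeasureTheory
open scoped ENNReal

noncomputable def Mag {N : ℕ} (a θ : Fin N → ℝ) : ℝ :=
  ‖∑ i, (a i : ℂ) * Complex.exp ((θ i : ℂ) * Complex.I)‖

open Complex ComplexConjugate Filter Topology
open scoped ComplexOrder

theorem Complex.nonneg_of_isLocalMax_re_mul_exp {w : ℂ}
    (h : IsLocalMax (fun t : ℝ => (w * exp (t * I)).re) 0) : 0 ≤ w := by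
  have hderiv : HasDerivAt (fun t : ℝ => (w * exp (t * I)).re) (-w.im) 0 := by
    simpa using (((hasDerivAt_id (0 : ℂ)).mul_const I).cexp.const_mul w).real_of_complex
  have him : w.im = 0 := neg_eq_zero.mp (h.hasDerivAt_eq_zero hderiv)
  refine nonneg_iff.mpr ⟨?_, him.symm⟩
  obtain ⟨t, hle, ht₀, htπ⟩ :=
    ((h.filter_mono nhdsWithin_le_nhds).and (Ioo_mem_nhdsGT Real.pi_pos)).exists
  have hcos : Real.cos t < 1 := by
    simpa using Real.cos_lt_cos_of_nonneg_of_le_pi le_rfl htπ.le ht₀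
  simp only [exp_mul_I, ← ofReal_cos, ← ofReal_sin, mul_re, add_re, add_im, ofReal_re,
    ofReal_im, mul_im, I_re, I_im, him, mul_zero, zero_mul, sub_zero, add_zero, mul_one,
    Real.cos_zero] at hle
  nlinarith

theorem Complex.nonneg_conj_mul_of_isLocalMax_norm_add_mul_exp {R z : ℂ}
    (h : IsLocalMax (fun t : ℝ => ‖R + z * exp (t * I)‖) 0) : 0 ≤ conj R * z := by
  have hsq : ∀ t : ℝ, ‖R + z * exp (t * I)‖ ^ 2 =
      ‖R‖ ^ 2 + ‖z‖ ^ 2 + 2 * (conj R * z * exp (t * I)).re := by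
    intro t
    rw [← normSq_eq_norm_sq, ← normSq_eq_norm_sq, ← normSq_eq_norm_sq, add_comm R,
      normSq_add, normSq_mul, normSq_eq_norm_sq (exp _), norm_exp_ofReal_mul_I]
    ring_nf
  refine nonneg_of_isLocalMax_re_mul_exp (h.mono fun t ht => ?_)
  have := pow_le_pow_left₀ (norm_nonneg _) ht 2
  rw [hsq, hsq] at this
  linarith

theorem Complex.norm_sum_eq_sum_norm_of_sq_le_conj_mul {ι : Type*} [Fintype ι] {z : ι → ℂ}
    (h : ∀ i, ((‖z i‖ ^ 2 : ℝ) : ℂ) ≤ conj (∑ j, z j) * z i) :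
    ‖∑ i, z i‖ = ∑ i, ‖z i‖ := by
  set S := ∑ j, z j
  have hconj : ∀ i, conj S * z i = (‖S‖ * ‖z i‖ : ℝ) := fun i => by
    rw [eq_coe_norm_of_nonneg ((by positivity : (0 : ℂ) ≤ _).trans (h i)), norm_mul, norm_conj]
  have hsq : ‖S‖ ^ 2 = ‖S‖ * ∑ i, ‖z i‖ := by
    have : (conj S * S : ℂ) = ∑ i, conj S * z i := Finset.mul_sum _ _ _
    rw [conj_mul'] at this
    simp only [hconj, ← ofReal_sum, ← ofReal_pow, ofReal_inj] at this
    rw [this, Finset.mul_sum]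
  rcases (norm_nonneg S).eq_or_lt with hS | hS
  · have hz : ∀ i, ‖z i‖ = 0 := fun i => by
      have := re_le_re (h i)
      rw [hconj, ← hS, zero_mul, ofReal_re, ofReal_re] at this
      exact pow_eq_zero_iff two_ne_zero |>.mp (this.antisymm (by positivity))
    simp [hz, ← hS]
  · nlinarith

noncomputable def phasor {N : ℕ} (a θ : Fin N → ℝ) (i : Fin N) : ℂ :=
  a i * exp (θ i * I)

section Phasor

variable {N : ℕ} (a : Fin N → ℝ)

theorem mag_eq_norm_sum_phasor (θ : Fin N → ℝ) : Mag a θ = ‖∑ i, phasor a θ i‖ := rfl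

theorem continuous_mag : Continuous (Mag a) := by
  unfold Mag
  fun_prop

theorem norm_phasor (θ : Fin N → ℝ) (i : Fin N) : ‖phasor a θ i‖ = |a i| := by
  rw [phasor, norm_mul, norm_exp_ofReal_mul_I, norm_real, Real.norm_eq_abs, mul_one]

theorem sum_phasor_add_single (θ : Fin N → ℝ) (i : Fin N) (t : ℝ) :
    ∑ j, phasor a (θ + Pi.single i t) j =
      (∑ j, phasor a θ j - phasor a θ i) + phasor a θ i * exp (t * I) := by
  have hterm : ∀ j, phasor a (θ + Pi.single i t) j =
      phasor a θ j + (Pi.single i (phasor a θ i * (exp (t * I) - 1)) : Fin N → ℂ) j := by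
    intro j
    rcases eq_or_ne j i with rfl | hj
    · simp only [phasor, Pi.add_apply, Pi.single_eq_same, ofReal_add, add_mul, exp_add]
      ring
    · simp [phasor, hj]
  rw [Fintype.sum_congr _ _ hterm, Finset.sum_add_distrib, Finset.sum_pi_single']
  simp only [Finset.mem_univ, if_true]
  ring

theorem IsLocalMax.sq_norm_phasor_le {θ : Fin N → ℝ} (h : IsLocalMax (Mag a) θ) (i : Fin N) :
    ((‖phasor a θ i‖ ^ 2 : ℝ) : ℂ) ≤ conj (∑ j, phasor a θ j) * phasor a θ i := by
  have hline : IsLocalMax (fun t : ℝ => Mag a (θ + Pi.single i t)) 0 := by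
    have hcont : Continuous fun t : ℝ => θ + (Pi.single i t : Fin N → ℝ) :=
      continuous_const.add (continuous_single (A := fun _ : Fin N => ℝ) i)
    rw [← add_zero θ, ← Pi.single_zero i] at h
    exact h.comp_tendsto (g := fun t => θ + Pi.single i t) (hcont.tendsto 0)
  simp only [mag_eq_norm_sum_phasor, sum_phasor_add_single] at hline
  rw [ofReal_pow, ← conj_mul', ← sub_nonneg]
  convert nonneg_conj_mul_of_isLocalMax_norm_add_mul_exp hline using 1
  simp only [map_sub]
  ring

theorem IsLocalMax.mag_eq_sum_abs {θ : Fin N → ℝ} (h : IsLocalMax (Mag a) θ) :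
    Mag a θ = ∑ i, |a i| := by
  rw [mag_eq_norm_sum_phasor]
  simp only [← norm_phasor a θ]
  exact norm_sum_eq_sum_norm_of_sq_le_conj_mul (h.sq_norm_phasor_le a)

end Phasor

theorem exists_lt_apply_add_of_not_isLocalMax {G : Type*} [TopologicalSpace G] [AddGroup G]
    [IsTopologicalAddGroup G] {f : G → ℝ} {x : G} (hf : ¬IsLocalMax f x) {s : Set G}
    (hs : s ∈ 𝓝 0) : ∃ u ∈ s, f x < f (x + u) := by
  contrapose! hf
  rw [IsLocalMax, IsMaxFilter, ← map_add_left_nhds_zero, eventually_map]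
  exact Filter.mem_of_superset hs hf

theorem Continuous.measure_sep_le_pos {X : Type*} [TopologicalSpace X] [MeasurableSpace X]
    {μ : Measure X} [μ.IsOpenPosMeasure] {f : X → ℝ} (hf : Continuous f) {s : Set X} {x : X}
    (hx : x ∈ interior s) {c : ℝ} (hc : c < f x) : 0 < μ {y | y ∈ s ∧ c ≤ f y} := by
  refine (isOpen_interior.inter (isOpen_lt continuous_const hf)).measure_pos μ ⟨x, hx, hc⟩
    |>.trans_le (measure_mono ?_)
  exact fun y hy => ⟨interior_subset hy.1, hy.2.le⟩

theorem ENNReal.exists_pos_ofReal_mul_le {x y : ℝ≥0∞} (hx : x ≠ 0) (hy : y ≠ ∞) :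
    ∃ η > (0 : ℝ), ENNReal.ofReal η * y ≤ x := by
  obtain ⟨η, hη, hlt⟩ := exists_nnreal_pos_mul_lt hy hx
  exact ⟨η, hη, by simpa using hlt.le⟩

/-- The probability under the uniform distribution on the cube `[-Δ, Δ]^N` is expressed through
Lebesgue measure: the improving perturbations fill at least an `η` fraction of the cube. -/
theorem positive_improvement_probability_general {N : ℕ}
    (a : Fin N → ℝ) (Δ ε : ℝ) (hΔ : 0 < Δ) (hε : 0 < ε)
    (θ : Fin N → ℝ) (hθ : Mag a θ < (∑ i, a i) - ε) :
    ∃ γ > 0, ∃ η > 0,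
      ENNReal.ofReal η *
          volume (Set.pi Set.univ fun _ : Fin N => Set.Icc (-Δ) Δ) ≤
        volume {u : Fin N → ℝ |
          u ∈ Set.pi Set.univ (fun _ : Fin N => Set.Icc (-Δ) Δ) ∧
            γ ≤ Mag a (θ + u) - Mag a θ} := by
  set box := Set.pi Set.univ fun _ : Fin N => Set.Icc (-Δ) Δ
  have hnot_max : ¬IsLocalMax (Mag a) θ := fun h => by
    have : ∑ i, a i ≤ ∑ i, |a i| := Finset.sum_le_sum fun i _ => le_abs_self (a i)
    linarith [h.mag_eq_sum_abs]
  have hbox : box ∈ 𝓝 0 :=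
    set_pi_mem_nhds Set.finite_univ fun _ _ => Icc_mem_nhds (neg_lt_zero.mpr hΔ) hΔ
  obtain ⟨u, hu, hlt⟩ := exists_lt_apply_add_of_not_isLocalMax hnot_max
    (isOpen_interior.mem_nhds (mem_interior_iff_mem_nhds.mpr hbox))
  refine ⟨(Mag a (θ + u) - Mag a θ) / 2, by linarith, ENNReal.exists_pos_ofReal_mul_le ?_ ?_⟩
  · have hgain : Continuous fun v => Mag a (θ + v) - Mag a θ :=
      ((continuous_mag a).comp (continuous_const_add θ)).sub continuous_const
    exact (hgain.measure_sep_le_pos hu (by linarith)).ne'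
  · exact (isCompact_univ_pi fun _ => isCompact_Icc).measure_lt_top.ne

/-- Proposition 1: positive improvement probability. The probability (under the
uniform distribution on the hypercube `[-Δ, Δ]^N`) of improving `Mag` by at least
`γ` is at least `η`, stated via Lebesgue measure: the measure of improving
perturbations is at least `η` times the measure of the hypercube. -/
theorem positive_improvement_probability {N : ℕ} (hN : 1 ≤ N)
    (a : Fin N → ℝ) (ha : ∀ i, 0 < a i) (Δ ε : ℝ) (hΔ : 0 < Δ) (hε : 0 < ε)
    (θ : Fin N → ℝ) (hθ : Mag a θ < (∑ i, a i) - ε) :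
    ∃ γ > 0, ∃ η > 0,
      ENNReal.ofReal η *
          volume (Set.pi Set.univ fun _ : Fin N => Set.Icc (-Δ) Δ) ≤
        volume {u : Fin N → ℝ |
          u ∈ Set.pi Set.univ (fun _ : Fin N => Set.Icc (-Δ) Δ) ∧
            γ ≤ Mag a (θ + u) - Mag a θ} :=
  positive_improvement_probability_general a Δ ε hΔ hε θ hθ
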